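/- Let M = {0,1} be the two-element commutative monoid under multiplication. Then K(M,2) does not satisfy the Beck–Chevalley condition BC_{0,3}[5]; in particular K(M,2) is not a Skvortsov–Shehtman complex. Concretely: the family (a_{ijk}) indexed by 0 ≤ i < j < k ≤ 5 with {0,3} ⊄ {i,j,k}, defined by a_{015} = a_{024} = a_{135} = a_{234} = 1 and a_{ijk} = 0 otherwise, satisfies a_{ikl}·a_{ijk} = a_{ijl}·a_{jkl} for all applicable 0 ≤ i < j < k < l ≤ 5 with {0,3} ⊄ {i,j,k,l}, but there exist no elements y_{013}, y_{023}, z_{034}, z_{035} ∈ {0,1} with z_{035}·y_{013} = 1, z_{034}·y_{023} = 1, z_{034}·y_{013} = 0 and z_{035}·y_{023} = 0. -/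

import Mathlib

open CategoryTheory Simplicial

/-- The Kan condition `Kan_p[1]` in dimension 1. -/
def KanCondition1 (S : SSet) (p : Fin 2) : Prop :=
  ∀ c : (i : Fin 2) → i ≠ p → S _⦋0⦌,
    ∃ x : S _⦋1⦌, ∀ (i : Fin 2) (hi : i ≠ p), S.δ i x = c i hi

/-- The Kan condition `Kan_p[k+2]` in dimensions `≥ 2`. -/
def KanCondition (S : SSet) (k : ℕ) (p : Fin (k + 3)) : Prop :=
  ∀ c : (i : Fin (k + 3)) → i ≠ p → S _⦋k + 1⦌,
    (∀ (i j : Fin (k + 3)) (hij : i < j) (hi : i ≠ p) (hj : j ≠ p),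
      S.δ (⟨i.1, by have h1 : i.1 < j.1 := hij; have h2 := j.isLt; omega⟩ : Fin (k + 2)) (c j hj) =
      S.δ (⟨j.1 - 1, by have h2 := j.isLt; omega⟩ : Fin (k + 2)) (c i hi)) →
    ∃ x : S _⦋k + 2⦌, ∀ (i : Fin (k + 3)) (hi : i ≠ p), S.δ i x = c i hi

/-- The Beck–Chevalley condition `BC_{p,q}[k+2]`. -/
def BCCondition (S : SSet) (k : ℕ) (p q : Fin (k + 3)) (hpq : p < q) : Prop :=
  ∀ cp cq : S _⦋k + 1⦌,
    S.δ (⟨p.1, by have h1 : p.1 < q.1 := hpq; have h2 := q.isLt; omega⟩ : Fin (k + 2)) cq =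
    S.δ (⟨q.1 - 1, by have h2 := q.isLt; omega⟩ : Fin (k + 2)) cp →
    ∃ x : S _⦋k + 2⦌, S.δ p x = cp ∧ S.δ q x = cq


open CategoryTheory Simplicial

/-- The 2-cocycle condition for a family `a = (a_{ijk})_{i<j<k}` of elements of a commutative
monoid `M`. -/
def IsCocycle (M : Type) [CommMonoid M] {n : ℕ}
    (a : (i j k : Fin (n + 1)) → i < j → j < k → M) : Prop :=
  ∀ (i j k l : Fin (n + 1)) (hij : i < j) (hjk : j < k) (hkl : k < l),
    a i k l (hij.trans hjk) hkl * a i j k hij hjk =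
      a i j l hij (hjk.trans hkl) * a j k l hjk hkl

/-- Pullback of a family of elements of `M` along a morphism of the simplex category:
`(f^* a)_{ijk} = a_{f(i) f(j) f(k)}` when `f(i) < f(j) < f(k)`, and `1` otherwise. -/
def pullFamily (M : Type) [CommMonoid M] {m n : SimplexCategory} (f : m ⟶ n)
    (a : (i j k : Fin (n.len + 1)) → i < j → j < k → M)
    (i j k : Fin (m.len + 1)) (_ : i < j) (_ : j < k) : M :=
  if h : f.toOrderHom i < f.toOrderHom j ∧ f.toOrderHom j < f.toOrderHom k
  then a (f.toOrderHom i) (f.toOrderHom j) (f.toOrderHom k) h.1 h.2 else 1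

lemma family_congr (M : Type) [CommMonoid M] {n : ℕ}
    (a : (i j k : Fin (n + 1)) → i < j → j < k → M)
    {i i' j j' k k' : Fin (n + 1)} (hi : i = i') (hj : j = j') (hk : k = k')
    {hij hjk hij' hjk'} : a i j k hij hjk = a i' j' k' hij' hjk' := by
  subst hi; subst hj; subst hk; rfl

lemma pullFamily_isCocycle (M : Type) [CommMonoid M] {m n : SimplexCategory} (f : m ⟶ n)
    (a : (i j k : Fin (n.len + 1)) → i < j → j < k → M) (ha : IsCocycle M a) :
    IsCocycle M (pullFamily M f a) := by
  intro i j k l hij hjk hkl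
  have h1 : f.toOrderHom i ≤ f.toOrderHom j := f.toOrderHom.monotone hij.le
  have h2 : f.toOrderHom j ≤ f.toOrderHom k := f.toOrderHom.monotone hjk.le
  have h3 : f.toOrderHom k ≤ f.toOrderHom l := f.toOrderHom.monotone hkl.le
  unfold pullFamily
  split_ifs <;> first | omega | skip
  all_goals try simp only [one_mul, mul_one]
  all_goals
    first
      | rfl
      | (exact ha _ _ _ _ _ _ _)
      | (exact family_congr M a (by omega) (by omega) (by omega))

/-- The simplicial set `K(M,2)` associated to a commutative monoid `M`: its `n`-simplices are
families `(a_{ijk})_{0 ≤ i < j < k ≤ n}` of elements of `M` satisfying the cocycle condition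
`a_{ikl} * a_{ijk} = a_{ijl} * a_{jkl}`. -/
def K2 (M : Type) [CommMonoid M] : SSet.{0} where
  obj n := { a : (i j k : Fin (n.unop.len + 1)) → i < j → j < k → M // IsCocycle M a }
  map {n₁ n₂} f := TypeCat.ofHom fun a => ⟨pullFamily M f.unop a.1, pullFamily_isCocycle M f.unop a.1 a.2⟩
  map_id n := by
    apply TypeCat.homEquiv.injective
    funext a
    apply Subtype.ext
    funext i j k hij hjk
    show pullFamily M (𝟙 n.unop) a.1 i j k hij hjk = a.1 i j k hij hjk
    unfold pullFamily
    rw [dif_pos ⟨hij, hjk⟩]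
    exact family_congr M a.1 rfl rfl rfl
  map_comp {n₁ n₂ n₃} f g := by
    apply TypeCat.homEquiv.injective
    funext a
    apply Subtype.ext
    funext i j k hij hjk
    show pullFamily M (g.unop ≫ f.unop) a.1 i j k hij hjk =
      pullFamily M g.unop (pullFamily M f.unop a.1) i j k hij hjk
    have m1 : g.unop.toOrderHom i ≤ g.unop.toOrderHom j := g.unop.toOrderHom.monotone hij.le
    have m2 : g.unop.toOrderHom j ≤ g.unop.toOrderHom k := g.unop.toOrderHom.monotone hjk.le
    unfold pullFamily
    simp only [show ∀ x, (g.unop ≫ f.unop).toOrderHom x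
        = f.unop.toOrderHom (g.unop.toOrderHom x) from fun _ => rfl]
    rcases lt_or_eq_of_le m1 with s1 | s1 <;> rcases lt_or_eq_of_le m2 with s2 | s2
    · split_ifs <;> first | rfl | omega
    · have e2 : f.unop.toOrderHom (g.unop.toOrderHom j) = f.unop.toOrderHom (g.unop.toOrderHom k) :=
        congrArg _ s2
      split_ifs <;> first | rfl | omega
    · have e1 : f.unop.toOrderHom (g.unop.toOrderHom i) = f.unop.toOrderHom (g.unop.toOrderHom j) :=
        congrArg _ s1
      split_ifs <;> first | rfl | omega
    · have e1 : f.unop.toOrderHom (g.unop.toOrderHom i) = f.unop.toOrderHom (g.unop.toOrderHom j) :=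
        congrArg _ s1
      have e2 : f.unop.toOrderHom (g.unop.toOrderHom j) = f.unop.toOrderHom (g.unop.toOrderHom k) :=
        congrArg _ s2
      split_ifs <;> first | rfl | omega


/-- The condition `{p,q} ⊄ {i,j,k,l}`. -/
def NotBothMem4 {N : ℕ} (p q i j k l : Fin N) : Prop :=
  ¬((p = i ∨ p = j ∨ p = k ∨ p = l) ∧ (q = i ∨ q = j ∨ q = k ∨ q = l))

/-- The family of elements of the multiplicative monoid `{0,1}` with
`a_{015} = a_{024} = a_{135} = a_{234} = 1` and all remaining entries `0`. -/
def exampleFamily (i j k : Fin 6) : ZMod 2 :=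
  if (i = 0 ∧ j = 1 ∧ k = 5) ∨ (i = 0 ∧ j = 2 ∧ k = 4) ∨
     (i = 1 ∧ j = 3 ∧ k = 5) ∨ (i = 2 ∧ j = 3 ∧ k = 4) then 1 else 0

/-! Prescribing the faces `d₀ x` and `d₃ x` of a 5-simplex `x` to be the restrictions of the
family `a` away from `0` and from `3` fixes every entry `x_{ijk}` with `{0,3} ⊄ {i,j,k}` to be
`a_{ijk}`. The cocycle conditions of `x` at the
quadruples `0135, 0234, 0134, 0235` then read `x₀₃₅ x₀₁₃ = a₀₁₅ a₁₃₅ = 1`, `x₀₃₄ x₀₂₃ = 1`,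
`x₀₃₄ x₀₁₃ = 0`, `x₀₃₅ x₀₂₃ = 0`; in `{0,1}` the first two force all four unknowns to be `1`. -/

def IsCocycleOn (M : Type) [CommMonoid M] {N : ℕ} (a : Fin N → Fin N → Fin N → M)
    (s : Set (Fin N)) : Prop :=
  ∀ i j k l, i < j → j < k → k < l → i ∈ s → j ∈ s → k ∈ s → l ∈ s →
    a i k l * a i j k = a i j l * a j k l

namespace K2

variable {M : Type} [CommMonoid M] {n : ℕ}

lemma δ_val (p : Fin (n + 2)) (x : K2 M _⦋n + 1⦌) (i j k : Fin (n + 1)) (hij : i < j)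
    (hjk : j < k) :
    ((K2 M).δ p x).1 i j k hij hjk =
      x.1 (p.succAbove i) (p.succAbove j) (p.succAbove k)
        (Fin.succAbove_lt_succAbove_iff.2 hij) (Fin.succAbove_lt_succAbove_iff.2 hjk) :=
  dif_pos ⟨Fin.succAbove_lt_succAbove_iff.2 hij, Fin.succAbove_lt_succAbove_iff.2 hjk⟩

lemma isCocycle_comp_succAbove {a : Fin (n + 2) → Fin (n + 2) → Fin (n + 2) → M}
    {p : Fin (n + 2)} (ha : IsCocycleOn M a {p}ᶜ) :
    IsCocycle M fun (i j k : Fin (n + 1)) _ _ =>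
      a (p.succAbove i) (p.succAbove j) (p.succAbove k) :=
  fun _ _ _ _ hij hjk hkl =>
    ha _ _ _ _ (Fin.succAbove_lt_succAbove_iff.2 hij) (Fin.succAbove_lt_succAbove_iff.2 hjk)
      (Fin.succAbove_lt_succAbove_iff.2 hkl) (Fin.succAbove_ne _ _) (Fin.succAbove_ne _ _)
      (Fin.succAbove_ne _ _) (Fin.succAbove_ne _ _)

def face (a : Fin (n + 2) → Fin (n + 2) → Fin (n + 2) → M) (p : Fin (n + 2))
    (ha : IsCocycleOn M a {p}ᶜ) : K2 M _⦋n⦌ :=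
  ⟨_, isCocycle_comp_succAbove ha⟩

lemma δ_face {a : Fin (n + 3) → Fin (n + 3) → Fin (n + 3) → M} {i j : Fin (n + 2)}
    (hij : i ≤ j) (hi : IsCocycleOn M a {i.castSucc}ᶜ) (hj : IsCocycleOn M a {j.succ}ᶜ) :
    (K2 M).δ i (face a j.succ hj) = (K2 M).δ j (face a i.castSucc hi) := by
  have hcomm (x : Fin (n + 1)) :
      j.succ.succAbove (i.succAbove x) = i.castSucc.succAbove (j.succAbove x) :=
    congrArg (fun f => f.toOrderHom x) (SimplexCategory.δ_comp_δ hij)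
  apply Subtype.ext
  funext x y z _ _
  rw [δ_val, δ_val]
  simp only [face, hcomm]

lemma val_eq_of_δ_eq_face {a : Fin (n + 2) → Fin (n + 2) → Fin (n + 2) → M}
    {p : Fin (n + 2)} {ha : IsCocycleOn M a {p}ᶜ} {x : K2 M _⦋n + 1⦌}
    (hx : (K2 M).δ p x = face a p ha) {i j k : Fin (n + 2)} (hi : i ≠ p) (hj : j ≠ p)
    (hk : k ≠ p) (hij : i < j) (hjk : j < k) : x.1 i j k hij hjk = a i j k := by
  obtain ⟨i, rfl⟩ := Fin.exists_succAbove_eq hi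
  obtain ⟨j, rfl⟩ := Fin.exists_succAbove_eq hj
  obtain ⟨k, rfl⟩ := Fin.exists_succAbove_eq hk
  rw [← δ_val]
  exact congrArg (fun s => s.1 i j k (Fin.succAbove_lt_succAbove_iff.1 hij)
    (Fin.succAbove_lt_succAbove_iff.1 hjk)) hx

end K2

lemma exampleFamily_cocycle_of_notBothMem4 :
    ∀ i j k l : Fin 6, i < j → j < k → k < l → NotBothMem4 0 3 i j k l →
      exampleFamily i k l * exampleFamily i j k = exampleFamily i j l * exampleFamily j k l := by
  unfold NotBothMem4
  decide

lemma exampleFamily_isCocycleOn_compl {p : Fin 6} (hp : p = 0 ∨ p = 3) :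
    IsCocycleOn (ZMod 2) exampleFamily {p}ᶜ := by
  intro i j k l hij hjk hkl hi hj hk hl
  refine exampleFamily_cocycle_of_notBothMem4 i j k l hij hjk hkl ?_
  simp only [Set.mem_compl_singleton_iff] at hi hj hk hl
  unfold NotBothMem4
  grind

lemma not_exists_zmod_two_mul_system :
    ¬ ∃ y013 y023 z034 z035 : ZMod 2,
      z035 * y013 = 1 ∧ z034 * y023 = 1 ∧ z034 * y013 = 0 ∧ z035 * y023 = 0 := by
  decide

theorem k2_zmod_two_not_bcCondition_zero_three :
    ¬ BCCondition (K2 (ZMod 2)) 3 0 3 (by decide) := by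
  intro h
  obtain ⟨x, hx0, hx3⟩ :=
    h (K2.face exampleFamily 0 (exampleFamily_isCocycleOn_compl (.inl rfl)))
      (K2.face exampleFamily 3 (exampleFamily_isCocycleOn_compl (.inr rfl)))
      (K2.δ_face (i := 0) (j := 2) (by decide) _ _)
  have hx (i j k : Fin 6) (hij : i < j) (hjk : j < k)
      (h : (i ≠ 0 ∧ j ≠ 0 ∧ k ≠ 0) ∨ (i ≠ 3 ∧ j ≠ 3 ∧ k ≠ 3)) :
      x.1 i j k hij hjk = exampleFamily i j k := by
    rcases h with ⟨hi, hj, hk⟩ | ⟨hi, hj, hk⟩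
    exacts [K2.val_eq_of_δ_eq_face hx0 hi hj hk _ _, K2.val_eq_of_δ_eq_face hx3 hi hj hk _ _]
  have hcocycle (j l : Fin 6) (h0j : 0 < j) (hj3 : j < 3) (h3l : 3 < l) :
      x.1 0 3 l (by decide) h3l * x.1 0 j 3 h0j hj3 =
        exampleFamily 0 j l * exampleFamily j 3 l := by
    rw [x.2 0 j 3 l h0j hj3 h3l, hx 0 j l _ _ (.inr ⟨by decide, hj3.ne, h3l.ne'⟩),
      hx j 3 l _ _ (.inl ⟨h0j.ne', by decide, (h0j.trans (hj3.trans h3l)).ne'⟩)]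
  exact not_exists_zmod_two_mul_system ⟨x.1 0 1 3 (by decide) (by decide),
    x.1 0 2 3 (by decide) (by decide), x.1 0 3 4 (by decide) (by decide),
    x.1 0 3 5 (by decide) (by decide), hcocycle 1 5 (by decide) (by decide) (by decide),
    hcocycle 2 4 (by decide) (by decide) (by decide),
    hcocycle 1 4 (by decide) (by decide) (by decide),
    hcocycle 2 5 (by decide) (by decide) (by decide)⟩

/-- Let `M = {0,1}` be the two-element commutative monoid under multiplication (the
multiplicative monoid of `ZMod 2`). Then: the concrete family above satisfies all the cocycle
equations indexed by quadruples not containing both `0` and `3`; there are no elements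
`y_{013}, y_{023}, z_{034}, z_{035}` of `M` solving the four displayed equations; `K(M,2)` does
not satisfy the Beck-Chevalley condition `BC_{0,3}[5]`; and in particular `K(M,2)` is not a
Skvortsov-Shehtman complex. -/
theorem k2_zmod_two_not_ssComplex :
    (∀ i j k l : Fin 6, i < j → j < k → k < l → NotBothMem4 0 3 i j k l →
      exampleFamily i k l * exampleFamily i j k = exampleFamily i j l * exampleFamily j k l) ∧
    (¬ ∃ y013 y023 z034 z035 : ZMod 2,
      z035 * y013 = 1 ∧ z034 * y023 = 1 ∧ z034 * y013 = 0 ∧ z035 * y023 = 0) ∧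
    ¬ BCCondition (K2 (ZMod 2)) 3 0 3 (by decide) ∧
    ¬ (∀ (k : ℕ) (p q : Fin (k + 3)) (hpq : p < q), BCCondition (K2 (ZMod 2)) k p q hpq) :=
  ⟨exampleFamily_cocycle_of_notBothMem4, not_exists_zmod_two_mul_system,
    k2_zmod_two_not_bcCondition_zero_three,
    fun h => k2_zmod_two_not_bcCondition_zero_three (h 3 0 3 (by decide))⟩
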